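/- arXiv:1706.08027 — 5 statements merged into one kernel-verified Lean document; each statement's English description precedes it below -/
import Mathlib

section
/- For any polymatroid M, the dual is compact (i.e., (M*)* agrees with compactness: every element e of M* satisfies r*(E − e) = r*(E)), and the double dual equals the compactification: (M*)* = M^♭. Moreover λ_M = λ_{M*} = λ_{M^♭}. -/
/-!
Everything is a computation from the definitions, resting on two facts: for `X ⊆ E` the
complement of `E \ X` in `E` is `X` again, and sums over `X` and over `E \ X` add up to the sum
over `E`. With `r ∅ = 0` these give `r*(E) = Σ_{e ∈ E} r({e}) - r(E)` and
`r*(E \ X) = r*(E) - Σ_{e ∈ X} r({e}) + r(X)`, from which compactness of `M*`, the formula for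
`(M*)*` and the invariance of `λ` follow. The compactification changes `r` by a modular
function, which `λ` does not see.
-/

/-- The dual rank function `r*(Y) = Σ_{e ∈ Y} r({e}) + r(E \ Y) - r(E)`. -/
def dualRank {α : Type*} [DecidableEq α] (E : Finset α) (r : Finset α → ℤ)
    (Y : Finset α) : ℤ :=
  (∑ e ∈ Y, r {e}) + r (E \ Y) - r E

/-- The compactification rank function
`r^♭(X) = r(X) + Σ_{x ∈ X} [r(E \ {x}) - r(E)]`. -/
def flatRank {α : Type*} [DecidableEq α] (E : Finset α) (r : Finset α → ℤ)
    (X : Finset α) : ℤ :=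
  r X + ∑ x ∈ X, (r (E \ {x}) - r E)

open Finset

def connectivity {α : Type*} [DecidableEq α] (E : Finset α) (r : Finset α → ℤ)
    (X : Finset α) : ℤ :=
  r X + r (E \ X) - r E

section

variable {α : Type*} [DecidableEq α] {E X : Finset α} {r : Finset α → ℤ}

lemma dualRank_self (hr0 : r ∅ = 0) : dualRank E r E = (∑ e ∈ E, r {e}) - r E := by
  simp [dualRank, hr0]

lemma dualRank_sdiff (hX : X ⊆ E) :
    dualRank E r (E \ X) = (∑ e ∈ E, r {e}) - (∑ e ∈ X, r {e}) + r X - r E := by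
  have hsplit := sum_sdiff (f := fun e => r {e}) hX
  rw [dualRank, Finset.sdiff_sdiff_eq_self hX]
  linarith

lemma dualRank_singleton (e : α) : dualRank E r {e} = r {e} + r (E \ {e}) - r E := by
  simp [dualRank]

lemma dualRank_sdiff_singleton (hr0 : r ∅ = 0) {e : α} (he : e ∈ E) :
    dualRank E r (E \ {e}) = dualRank E r E := by
  rw [dualRank_sdiff (singleton_subset_iff.2 he), dualRank_self hr0, sum_singleton]
  ring

lemma dualRank_dualRank (hr0 : r ∅ = 0) (hX : X ⊆ E) :
    dualRank E (dualRank E r) X = flatRank E r X := by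
  change (∑ x ∈ X, dualRank E r {x}) + dualRank E r (E \ X) - dualRank E r E = _
  simp only [dualRank_singleton, dualRank_sdiff hX, dualRank_self hr0, flatRank,
    sum_sub_distrib, sum_add_distrib]
  ring

lemma connectivity_dualRank (hr0 : r ∅ = 0) (hX : X ⊆ E) :
    connectivity E (dualRank E r) X = connectivity E r X := by
  rw [connectivity, connectivity, dualRank_sdiff hX, dualRank_self hr0, dualRank]
  ring

lemma connectivity_flatRank (hX : X ⊆ E) :
    connectivity E (flatRank E r) X = connectivity E r X := by
  have hsplit := sum_sdiff (f := fun x => r (E \ {x}) - r E) hX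
  simp only [connectivity, flatRank]
  linarith

end

theorem dual_compact_double_dual_eq_flat_general {α : Type*} [DecidableEq α]
    (E : Finset α) (r : Finset α → ℤ)
    (hr0 : r ∅ = 0) :
    (∀ e ∈ E, dualRank E r (E \ {e}) = dualRank E r E) ∧
    (∀ X : Finset α, X ⊆ E → dualRank E (dualRank E r) X = flatRank E r X) ∧
    (∀ X : Finset α, X ⊆ E →
      r X + r (E \ X) - r E
        = dualRank E r X + dualRank E r (E \ X) - dualRank E r E ∧
      r X + r (E \ X) - r E
        = flatRank E r X + flatRank E r (E \ X) - flatRank E r E) :=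
  ⟨fun _ he => dualRank_sdiff_singleton hr0 he,
    fun _ hX => dualRank_dualRank hr0 hX,
    fun _ hX => ⟨(connectivity_dualRank hr0 hX).symm, (connectivity_flatRank hX).symm⟩⟩

/-- For a polymatroid `M`: the dual `M*` is compact, `(M*)* = M^♭`, and
`λ_M = λ_{M*} = λ_{M^♭}`. -/
theorem dual_compact_double_dual_eq_flat {α : Type*} [DecidableEq α]
    (E : Finset α) (r : Finset α → ℤ)
    (hr0 : r ∅ = 0)
    (hmono : ∀ X Y : Finset α, X ⊆ Y → Y ⊆ E → r X ≤ r Y)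
    (hsubmod : ∀ X Y : Finset α, X ⊆ E → Y ⊆ E →
      r (X ∪ Y) + r (X ∩ Y) ≤ r X + r Y) :
    (∀ e ∈ E, dualRank E r (E \ {e}) = dualRank E r E) ∧
    (∀ X : Finset α, X ⊆ E → dualRank E (dualRank E r) X = flatRank E r X) ∧
    (∀ X : Finset α, X ⊆ E →
      r X + r (E \ X) - r E
        = dualRank E r X + dualRank E r (E \ X) - dualRank E r E ∧
      r X + r (E \ X) - r E
        = flatRank E r X + flatRank E r (E \ X) - flatRank E r E) :=
  dual_compact_double_dual_eq_flat_general E r hr0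
end

section
/- Let M be a polymatroid and (A, B, C) a partition of its ground set into possibly empty subsets, with λ(A) = 1, λ(C) = 1, and λ(B) = 2. Then ⊓(A, B) = 1. -/
/-!
For a partition `(A, B, C)` of `E`, the sum `λ(A) + λ(C) - λ(B)` equals
`⊓(A, C) - (r(A ∪ B) + r(B ∪ C) - r(E) - r(B))`. Both terms are nonnegative: the first by
submodularity on the disjoint sets `A` and `C`, the second by submodularity on `A ∪ B` and
`B ∪ C`, whose union is `E` and whose intersection is `B`. As the sum is `1 + 1 - 2 = 0`, the
second term vanishes, and then `⊓(A, B) = λ(A) - (r(A ∪ B) + r(B ∪ C) - r(E) - r(B)) = 1`.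
-/

namespace Finset

variable {α : Type*} [DecidableEq α]

theorem union_inter_union_eq_of_disjoint {A C : Finset α} (B : Finset α) (hAC : Disjoint A C) :
    (A ∪ B) ∩ (B ∪ C) = B := by
  rw [union_comm A B, ← union_inter_distrib_left, disjoint_iff_inter_eq_empty.mp hAC,
    union_empty]

theorem union_union_union_eq (A B C : Finset α) : (A ∪ B) ∪ (B ∪ C) = A ∪ B ∪ C := by
  rw [union_assoc, union_left_idem, union_assoc]

end Finset

section Rank

open Finset

variable {α : Type*} [DecidableEq α]

theorem rank_union_le_of_disjoint {r : Finset α → ℤ} (hr0 : r ∅ = 0) {X Y : Finset α}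
    (hXY : Disjoint X Y) (hsubmod : r (X ∪ Y) + r (X ∩ Y) ≤ r X + r Y) :
    r (X ∪ Y) ≤ r X + r Y := by
  rwa [disjoint_iff_inter_eq_empty.mp hXY, hr0, add_zero] at hsubmod

theorem rank_add_le_of_disjoint_of_submodular {r : Finset α → ℤ} {A B C : Finset α}
    (hAC : Disjoint A C)
    (hsubmod : r ((A ∪ B) ∪ (B ∪ C)) + r ((A ∪ B) ∩ (B ∪ C)) ≤ r (A ∪ B) + r (B ∪ C)) :
    r (A ∪ B ∪ C) + r B ≤ r (A ∪ B) + r (B ∪ C) := by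
  rwa [union_union_union_eq, union_inter_union_eq_of_disjoint B hAC] at hsubmod

end Rank

open Finset in
theorem localConn_eq_one_of_lambdas_general {α : Type*} [DecidableEq α]
    (E : Finset α) (r : Finset α → ℤ)
    (hr0 : r ∅ = 0)
    (hsubmod : ∀ X Y : Finset α, X ⊆ E → Y ⊆ E →
      r (X ∪ Y) + r (X ∩ Y) ≤ r X + r Y)
    (A B C : Finset α) (hUnion : A ∪ B ∪ C = E)
    (hAC : Disjoint A C)
    (hlamA : r A + r (B ∪ C) - r E = 1)
    (hlamC : r C + r (A ∪ B) - r E = 1)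
    (hlamB : r B + r (A ∪ C) - r E = 2) :
    r A + r B - r (A ∪ B) = 1 := by
  subst hUnion
  have hAB : A ∪ B ⊆ A ∪ B ∪ C := subset_union_left
  have hBC : B ∪ C ⊆ A ∪ B ∪ C := union_subset (subset_union_right.trans hAB) subset_union_right
  have hA : A ⊆ A ∪ B ∪ C := subset_union_left.trans hAB
  have hC : C ⊆ A ∪ B ∪ C := subset_union_right.trans hBC
  have hAC_le := rank_union_le_of_disjoint hr0 hAC (hsubmod A C hA hC)
  have hgap := rank_add_le_of_disjoint_of_submodular hAC (hsubmod _ _ hAB hBC)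
  linarith

/-- Let `M` be a polymatroid and `(A, B, C)` a partition of its ground set
into possibly empty parts with `λ(A) = 1`, `λ(C) = 1`, and `λ(B) = 2`.
Then `⊓(A, B) = 1`. -/
theorem localConn_eq_one_of_lambdas {α : Type*} [DecidableEq α]
    (E : Finset α) (r : Finset α → ℤ)
    (hr0 : r ∅ = 0)
    (hmono : ∀ X Y : Finset α, X ⊆ Y → Y ⊆ E → r X ≤ r Y)
    (hsubmod : ∀ X Y : Finset α, X ⊆ E → Y ⊆ E →
      r (X ∪ Y) + r (X ∩ Y) ≤ r X + r Y)
    (A B C : Finset α) (hUnion : A ∪ B ∪ C = E)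
    (hAB : Disjoint A B) (hAC : Disjoint A C) (hBC : Disjoint B C)
    (hlamA : r A + r (B ∪ C) - r E = 1)
    (hlamC : r C + r (A ∪ B) - r E = 1)
    (hlamB : r B + r (A ∪ C) - r E = 2) :
    r A + r B - r (A ∪ B) = 1 :=
  localConn_eq_one_of_lambdas_general E r hr0 hsubmod A B C hUnion hAC hlamA hlamC hlamB
end

section
/- Let {j, k} be a prickly 3-separator of a 2-polymatroid P. Then P↓j can be obtained from P↓k by relabelling j as k; that is, for all X ⊆ E − {j, k}, r_{P↓j}(X) = r_{P↓k}(X) and r_{P↓j}(X ∪ {k}) = r_{P↓k}(X ∪ {j}) = r(X ∪ {j, k}) − 1. -/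
/-!
For `X ⊆ E \ {j, k}`, submodularity makes the marginal rank of `j` (or `k`) over `X` at least
its marginal rank `1` over `E \ {j, k}`, so neither compression lowers `r X`. Conversely the
marginal rank of `k` over `X ∪ {j}` is at most `r {j, k} - r {j} = 1`, and symmetrically, which
pins both `r_{P↓k}(X ∪ {j})` and `r_{P↓j}(X ∪ {k})` to `r (X ∪ {j, k}) - 1`.
-/

/-- The rank function of the compression `P↓x` of a 2-polymatroid `(E, r)`. -/
def downRank {α : Type*} [DecidableEq α] (r : Finset α → ℤ) (x : α)
    (X : Finset α) : ℤ :=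
  if r {x} = 0 ∨ r X < r (X ∪ {x}) then r X else r X - 1

open Finset

section Compression

variable {α : Type*} [DecidableEq α] {r : Finset α → ℤ} {x : α} {X : Finset α}

theorem downRank_of_lt (h : r X < r (X ∪ {x})) : downRank r x X = r X :=
  if_pos (Or.inr h)

theorem downRank_eq_rank_union_sub_one (hx : r {x} ≠ 0) (hle : r X ≤ r (X ∪ {x}))
    (hle_succ : r (X ∪ {x}) ≤ r X + 1) : downRank r x X = r (X ∪ {x}) - 1 := by
  unfold downRank
  split_ifs <;> omega

end Compression

section Submodular

variable {α : Type*} [DecidableEq α] {E : Finset α} {r : Finset α → ℤ}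

theorem rank_union_sub_rank_antitone
    (hmono : ∀ X Y : Finset α, X ⊆ Y → Y ⊆ E → r X ≤ r Y)
    (hsubmod : ∀ X Y : Finset α, X ⊆ E → Y ⊆ E → r (X ∪ Y) + r (X ∩ Y) ≤ r X + r Y)
    {X G Y : Finset α} (hXG : X ⊆ G) (hGE : G ⊆ E) (hYE : Y ⊆ E) :
    r (G ∪ Y) - r G ≤ r (X ∪ Y) - r X := by
  have hsub := hsubmod (X ∪ Y) G (union_subset (hXG.trans hGE) hYE) hGE
  have hunion : X ∪ Y ∪ G = G ∪ Y := by rw [union_right_comm, union_eq_right.mpr hXG]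
  have hinter : r X ≤ r ((X ∪ Y) ∩ G) :=
    hmono _ _ (subset_inter subset_union_left hXG) (inter_subset_right.trans hGE)
  rw [hunion] at hsub
  linarith

theorem rank_union_pair_sub_le
    (hmono : ∀ X Y : Finset α, X ⊆ Y → Y ⊆ E → r X ≤ r Y)
    (hsubmod : ∀ X Y : Finset α, X ⊆ E → Y ⊆ E → r (X ∪ Y) + r (X ∩ Y) ≤ r X + r Y)
    {X : Finset α} {j k : α} (hXE : X ⊆ E) (hjE : j ∈ E) (hkE : k ∈ E) :
    r (X ∪ {j, k}) - r (X ∪ {j}) ≤ r {j, k} - r {j} := by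
  have h := rank_union_sub_rank_antitone hmono hsubmod (subset_union_right : {j} ⊆ X ∪ {j})
    (union_subset hXE (singleton_subset_iff.mpr hjE)) (singleton_subset_iff.mpr hkE)
  rwa [union_assoc, ← insert_eq] at h

theorem downRank_union_singleton_eq
    (hmono : ∀ X Y : Finset α, X ⊆ Y → Y ⊆ E → r X ≤ r Y)
    (hsubmod : ∀ X Y : Finset α, X ⊆ E → Y ⊆ E → r (X ∪ Y) + r (X ∩ Y) ≤ r X + r Y)
    {X : Finset α} {j k : α} (hXE : X ⊆ E) (hjE : j ∈ E) (hkE : k ∈ E) (hk : r {k} ≠ 0)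
    (hjk : r {j, k} ≤ r {j} + 1) :
    downRank r k (X ∪ {j}) = r (X ∪ {j, k}) - 1 := by
  have hunion : X ∪ {j} ∪ {k} = X ∪ {j, k} := by rw [union_assoc, ← insert_eq]
  have hle : r (X ∪ {j}) ≤ r (X ∪ {j, k}) :=
    hmono _ _ (union_subset_union_right (singleton_subset_iff.mpr (mem_insert_self j {k})))
      (union_subset hXE (insert_subset hjE (singleton_subset_iff.mpr hkE)))
  have hstep := rank_union_pair_sub_le hmono hsubmod hXE hjE hkE
  rw [downRank_eq_rank_union_sub_one hk] <;> rw [hunion] <;> omega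

end Submodular

theorem down_j_relabel_down_k_general {α : Type*} [DecidableEq α]
    (E : Finset α) (r : Finset α → ℤ)
    (hmono : ∀ X Y : Finset α, X ⊆ Y → Y ⊆ E → r X ≤ r Y)
    (hsubmod : ∀ X Y : Finset α, X ⊆ E → Y ⊆ E →
      r (X ∪ Y) + r (X ∩ Y) ≤ r X + r Y)
    (j k : α) (hjE : j ∈ E) (hkE : k ∈ E)
    (hrj : r {j} = 2) (hrk : r {k} = 2) (hrjk : r ({j, k} : Finset α) = 3)
    (hguts_j : r ((E \ {j, k}) ∪ {j}) = r (E \ {j, k}) + 1)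
    (hguts_k : r ((E \ {j, k}) ∪ {k}) = r (E \ {j, k}) + 1) :
    ∀ X : Finset α, X ⊆ E \ {j, k} →
      downRank r j X = downRank r k X ∧
      downRank r j (X ∪ {k}) = downRank r k (X ∪ {j}) ∧
      downRank r k (X ∪ {j}) = r (X ∪ {j, k}) - 1 := by
  intro X hX
  have hXE : X ⊆ E := hX.trans sdiff_subset
  have hj_indep := rank_union_sub_rank_antitone hmono hsubmod hX sdiff_subset
    (singleton_subset_iff.mpr hjE)
  have hk_indep := rank_union_sub_rank_antitone hmono hsubmod hX sdiff_subset
    (singleton_subset_iff.mpr hkE)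
  have hdown_k := downRank_union_singleton_eq hmono hsubmod hXE hjE hkE (by omega) (by omega)
  have hdown_j := downRank_union_singleton_eq hmono hsubmod hXE hkE hjE (by omega)
    (by rw [pair_comm]; omega)
  rw [pair_comm] at hdown_j
  exact ⟨by rw [downRank_of_lt (by omega), downRank_of_lt (by omega)],
    hdown_j.trans hdown_k.symm, hdown_k⟩

/-- Let `{j, k}` be a prickly 3-separator of a 2-polymatroid `P`. Then `P↓j`
is obtained from `P↓k` by relabelling `j` as `k`: for all `X ⊆ E \ {j, k}`,
`r_{P↓j}(X) = r_{P↓k}(X)` and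
`r_{P↓j}(X ∪ {k}) = r_{P↓k}(X ∪ {j}) = r(X ∪ {j, k}) - 1`. -/
theorem down_j_relabel_down_k {α : Type*} [DecidableEq α]
    (E : Finset α) (r : Finset α → ℤ)
    (hr0 : r ∅ = 0)
    (hmono : ∀ X Y : Finset α, X ⊆ Y → Y ⊆ E → r X ≤ r Y)
    (hsubmod : ∀ X Y : Finset α, X ⊆ E → Y ⊆ E →
      r (X ∪ Y) + r (X ∩ Y) ≤ r X + r Y)
    (h2 : ∀ e ∈ E, r {e} ≤ 2)
    (j k : α) (hjE : j ∈ E) (hkE : k ∈ E) (hjk : j ≠ k)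
    (hrj : r {j} = 2) (hrk : r {k} = 2) (hrjk : r ({j, k} : Finset α) = 3)
    (hlam : r ({j, k} : Finset α) + r (E \ {j, k}) - r E = 2)
    (hguts_j : r ((E \ {j, k}) ∪ {j}) = r (E \ {j, k}) + 1)
    (hguts_k : r ((E \ {j, k}) ∪ {k}) = r (E \ {j, k}) + 1) :
    ∀ X : Finset α, X ⊆ E \ {j, k} →
      downRank r j X = downRank r k X ∧
      downRank r j (X ∪ {k}) = downRank r k (X ∪ {j}) ∧
      downRank r k (X ∪ {j}) = r (X ∪ {j, k}) - 1 :=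
  down_j_relabel_down_k_general E r hmono hsubmod j k hjE hkE hrj hrk hrjk hguts_j hguts_k
end

section
/- Compression commutes with deletion and contraction: in a 2-polymatroid P with distinct elements k and y, one has (P↓k) \ y = (P \ y)↓k and (P↓k)/y = (P/y)↓k. -/
/-- A polymatroid presented as a pair: ground set together with a rank
function. -/
abbrev PolyPair (α : Type*) := Finset α × (Finset α → ℤ)

/-- Deletion of an element. -/
def pmDel {α : Type*} [DecidableEq α] (M : PolyPair α) (y : α) : PolyPair α :=
  (M.1 \ {y}, M.2)

/-- Contraction of an element. -/
def pmCon {α : Type*} [DecidableEq α] (M : PolyPair α) (y : α) : PolyPair α :=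
  (M.1 \ {y}, fun X => M.2 (X ∪ {y}) - M.2 {y})

/-- Compression of an element. -/
def pmDown {α : Type*} [DecidableEq α] (M : PolyPair α) (x : α) : PolyPair α :=
  (M.1 \ {x},
    fun X => if M.2 {x} = 0 ∨ M.2 X < M.2 (X ∪ {x}) then M.2 X else M.2 X - 1)

/-!
Compression lowers the rank of `Z` by one exactly when `k` is not a loop and
`r (Z ∪ {k}) = r Z`. By submodularity, `r (A ∪ {k}) = r A` passes from `A` to every
superset of `A`, and (taking `A = ∅`) holds for every set when `k` is a loop. Hence,
comparing `(P↓k)/y` with `(P/y)↓k` on `X`: if `r ({y} ∪ {k}) = r {y}` the correction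
terms at `X ∪ {y}` and at `{y}` cancel in `(P↓k)/y` and `(P/y)↓k` has none, and
otherwise the correction at `{y}` vanishes and the remaining one is the same on both
sides. Deletion commutes with compression for purely formal reasons.
-/

theorem pmDel_pmDown_comm {α : Type*} [DecidableEq α] (M : PolyPair α) (k y : α) :
    pmDel (pmDown M k) y = pmDown (pmDel M y) k :=
  Prod.ext sdiff_sdiff_comm rfl

theorem pmCon_pmDown_fst {α : Type*} [DecidableEq α] (M : PolyPair α) (k y : α) :
    (pmCon (pmDown M k) y).1 = (pmDown (pmCon M y) k).1 :=
  sdiff_sdiff_comm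

section Rank

variable {α : Type*} [DecidableEq α] {E : Finset α} {r : Finset α → ℤ}

theorem rank_union_singleton_eq_of_subset
    (hmono : ∀ X Y : Finset α, X ⊆ Y → Y ⊆ E → r X ≤ r Y)
    (hsubmod : ∀ X Y : Finset α, X ⊆ E → Y ⊆ E → r (X ∪ Y) + r (X ∩ Y) ≤ r X + r Y)
    {A B : Finset α} {k : α} (hAB : A ⊆ B) (hBE : B ⊆ E) (hkE : k ∈ E)
    (hA : r (A ∪ {k}) = r A) : r (B ∪ {k}) = r B := by
  have hkE' : {k} ⊆ E := Finset.singleton_subset_iff.mpr hkE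
  have hAkE : A ∪ {k} ⊆ E := Finset.union_subset (hAB.trans hBE) hkE'
  have hsub := hsubmod B (A ∪ {k}) hBE hAkE
  rw [← Finset.union_assoc, Finset.union_eq_left.mpr hAB] at hsub
  have hA_le : r A ≤ r (B ∩ (A ∪ {k})) :=
    hmono _ _ (Finset.subset_inter hAB Finset.subset_union_left)
      (Finset.inter_subset_left.trans hBE)
  have hB_le : r B ≤ r (B ∪ {k}) :=
    hmono _ _ Finset.subset_union_left (Finset.union_subset hBE hkE')
  omega

theorem rank_union_singleton_eq_of_rank_singleton_eq_zero (hr0 : r ∅ = 0)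
    (hmono : ∀ X Y : Finset α, X ⊆ Y → Y ⊆ E → r X ≤ r Y)
    (hsubmod : ∀ X Y : Finset α, X ⊆ E → Y ⊆ E → r (X ∪ Y) + r (X ∩ Y) ≤ r X + r Y)
    {B : Finset α} {k : α} (hBE : B ⊆ E) (hkE : k ∈ E) (hk : r {k} = 0) :
    r (B ∪ {k}) = r B :=
  rank_union_singleton_eq_of_subset hmono hsubmod (Finset.empty_subset B) hBE hkE
    (by rw [Finset.empty_union, hk, hr0])

theorem pmCon_pmDown_snd (hr0 : r ∅ = 0)
    (hmono : ∀ X Y : Finset α, X ⊆ Y → Y ⊆ E → r X ≤ r Y)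
    (hsubmod : ∀ X Y : Finset α, X ⊆ E → Y ⊆ E → r (X ∪ Y) + r (X ∩ Y) ≤ r X + r Y)
    {k y : α} (hkE : k ∈ E) (hyE : y ∈ E) {X : Finset α} (hXE : X ⊆ E) :
    (pmCon (pmDown (E, r) k) y).2 X = (pmDown (pmCon (E, r) y) k).2 X := by
  have hyE' : {y} ⊆ E := Finset.singleton_subset_iff.mpr hyE
  have hXyE : X ∪ {y} ⊆ E := Finset.union_subset hXE hyE'
  simp only [pmCon, pmDown, Finset.union_right_comm X {k} {y}, Finset.union_comm {k} {y}]
  by_cases hk : r {k} = 0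
  · have hy := rank_union_singleton_eq_of_rank_singleton_eq_zero hr0 hmono hsubmod
      hyE' hkE hk
    split_ifs <;> omega
  by_cases hy : r ({y} ∪ {k}) = r {y}
  · have hXy := rank_union_singleton_eq_of_subset hmono hsubmod
      Finset.subset_union_right hXyE hkE hy
    split_ifs <;> omega
  · have hy_lt : r {y} < r ({y} ∪ {k}) :=
      lt_of_le_of_ne (hmono _ _ Finset.subset_union_left
        (Finset.union_subset hyE' (Finset.singleton_subset_iff.mpr hkE))) (Ne.symm hy)
    split_ifs <;> omega

end Rank

theorem down_commutes_del_con_general {α : Type*} [DecidableEq α]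
    (E : Finset α) (r : Finset α → ℤ)
    (hr0 : r ∅ = 0)
    (hmono : ∀ X Y : Finset α, X ⊆ Y → Y ⊆ E → r X ≤ r Y)
    (hsubmod : ∀ X Y : Finset α, X ⊆ E → Y ⊆ E →
      r (X ∪ Y) + r (X ∩ Y) ≤ r X + r Y)
    (k y : α) (hkE : k ∈ E) (hyE : y ∈ E) :
    ((pmDel (pmDown (E, r) k) y).1 = (pmDown (pmDel (E, r) y) k).1 ∧
      ∀ X : Finset α, X ⊆ (E \ {k}) \ {y} →
        (pmDel (pmDown (E, r) k) y).2 X = (pmDown (pmDel (E, r) y) k).2 X) ∧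
    ((pmCon (pmDown (E, r) k) y).1 = (pmDown (pmCon (E, r) y) k).1 ∧
      ∀ X : Finset α, X ⊆ (E \ {k}) \ {y} →
        (pmCon (pmDown (E, r) k) y).2 X = (pmDown (pmCon (E, r) y) k).2 X) := by
  rw [pmDel_pmDown_comm]
  refine ⟨⟨rfl, fun _ _ => rfl⟩, pmCon_pmDown_fst _ k y, fun X hX => ?_⟩
  exact pmCon_pmDown_snd hr0 hmono hsubmod hkE hyE
    (hX.trans (Finset.sdiff_subset.trans Finset.sdiff_subset))

/-- Compression commutes with deletion and contraction: in a 2-polymatroid `P`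
with distinct elements `k` and `y`, `(P↓k) \ y = (P \ y)↓k` and
`(P↓k)/y = (P/y)↓k`. -/
theorem down_commutes_del_con {α : Type*} [DecidableEq α]
    (E : Finset α) (r : Finset α → ℤ)
    (hr0 : r ∅ = 0)
    (hmono : ∀ X Y : Finset α, X ⊆ Y → Y ⊆ E → r X ≤ r Y)
    (hsubmod : ∀ X Y : Finset α, X ⊆ E → Y ⊆ E →
      r (X ∪ Y) + r (X ∩ Y) ≤ r X + r Y)
    (h2 : ∀ e ∈ E, r {e} ≤ 2)
    (k y : α) (hkE : k ∈ E) (hyE : y ∈ E) (hky : k ≠ y) :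
    ((pmDel (pmDown (E, r) k) y).1 = (pmDown (pmDel (E, r) y) k).1 ∧
      ∀ X : Finset α, X ⊆ (E \ {k}) \ {y} →
        (pmDel (pmDown (E, r) k) y).2 X = (pmDown (pmDel (E, r) y) k).2 X) ∧
    ((pmCon (pmDown (E, r) k) y).1 = (pmDown (pmCon (E, r) y) k).1 ∧
      ∀ X : Finset α, X ⊆ (E \ {k}) \ {y} →
        (pmCon (pmDown (E, r) k) y).2 X = (pmDown (pmCon (E, r) y) k).2 X) :=
  down_commutes_del_con_general E r hr0 hmono hsubmod k y hkE hyE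
end

section
/- Let P be a compact 2-polymatroid with a prickly 3-separator {j, k}. Then the compression P↓k is compact. -/
/-!
Since `k` is not a coloop and `r {k} = 2`, the compression lowers the rank of `E - k` to
`r E - 1`. For `e ≠ k`, adding `k` to `X = E - {e, k}` gives rank `r (E - e) = r E`, so `P↓k` is compact at `e` exactly when `r X ≥ r E - 1`. For `e = j` this is
`λ({j, k}) = 2`; otherwise `X` meets the line-pair `{j, k}` in `j`, and submodularity gives
`r E + r {j} ≤ r X + r {j, k}`, i.e. `r E + 2 ≤ r X + 3`.
-/

section

variable {α : Type*} [DecidableEq α]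

lemma downRank_eq_sub_one {r : Finset α → ℤ} {x : α} {X : Finset α} {R : ℤ}
    (hx : r {x} ≠ 0) (hXx : r (X ∪ {x}) = R) (hle : r X ≤ R) (hge : R - 1 ≤ r X) :
    downRank r x X = R - 1 := by
  unfold downRank
  split_ifs <;> omega

namespace Finset

lemma sdiff_pair_union_singleton {E : Finset α} {e k : α} (hk : k ∈ E) (hek : e ≠ k) :
    E \ {e, k} ∪ {k} = E \ {e} := by
  ext a
  simp only [mem_union, mem_sdiff, mem_insert, mem_singleton]
  grind

lemma sdiff_pair_union_pair {E : Finset α} {e j k : α} (hj : j ∈ E) (hk : k ∈ E)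
    (hej : e ≠ j) (hek : e ≠ k) :
    E \ {e, k} ∪ {j, k} = E \ {e} := by
  ext a
  simp only [mem_union, mem_sdiff, mem_insert, mem_singleton]
  grind

lemma sdiff_pair_inter_pair {E : Finset α} {e j k : α} (hj : j ∈ E) (hej : e ≠ j)
    (hjk : j ≠ k) :
    E \ {e, k} ∩ {j, k} = {j} := by
  ext a
  simp only [mem_inter, mem_sdiff, mem_insert, mem_singleton]
  grind

end Finset

lemma rank_sub_one_le_rank_sdiff_pair {E : Finset α} {r : Finset α → ℤ}
    (hsubmod : ∀ X Y : Finset α, X ⊆ E → Y ⊆ E → r (X ∪ Y) + r (X ∩ Y) ≤ r X + r Y)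
    {e j k : α} (hjE : j ∈ E) (hkE : k ∈ E) (hek : e ≠ k) (hjk : j ≠ k)
    (hcompact : r (E \ {e}) = r E) (hrj : r {j} = 2) (hrjk : r ({j, k} : Finset α) = 3)
    (hlam : r ({j, k} : Finset α) + r (E \ {j, k}) - r E = 2) :
    r E - 1 ≤ r (E \ {e, k}) := by
  by_cases hej : e = j
  · subst hej
    omega
  have hpair : ({j, k} : Finset α) ⊆ E := Finset.insert_subset hjE (by simpa using hkE)
  have h := hsubmod (E \ {e, k}) _ Finset.sdiff_subset hpair
  rw [Finset.sdiff_pair_union_pair hjE hkE hej hek, Finset.sdiff_pair_inter_pair hjE hej hjk,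
    hcompact, hrj, hrjk] at h
  omega

end

theorem down_compact_general {α : Type*} [DecidableEq α]
    (E : Finset α) (r : Finset α → ℤ)
    (hmono : ∀ X Y : Finset α, X ⊆ Y → Y ⊆ E → r X ≤ r Y)
    (hsubmod : ∀ X Y : Finset α, X ⊆ E → Y ⊆ E →
      r (X ∪ Y) + r (X ∩ Y) ≤ r X + r Y)
    (hcompact : ∀ e ∈ E, r (E \ {e}) = r E)
    (j k : α) (hjE : j ∈ E) (hkE : k ∈ E) (hjk : j ≠ k)
    (hrj : r {j} = 2) (hrk : r {k} = 2) (hrjk : r ({j, k} : Finset α) = 3)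
    (hlam : r ({j, k} : Finset α) + r (E \ {j, k}) - r E = 2) :
    ∀ e ∈ E \ {k},
      downRank r k ((E \ {k}) \ {e}) = downRank r k (E \ {k}) := by
  intro e he
  obtain ⟨heE, hek⟩ : e ∈ E ∧ e ≠ k := by simpa using he
  have hrk0 : r {k} ≠ 0 := by omega
  have hrank_k := hcompact k hkE
  have hrank_e := hcompact e heE
  have hdown_k : downRank r k (E \ {k}) = r E - 1 :=
    downRank_eq_sub_one hrk0 (by rw [Finset.sdiff_union_of_subset (by simpa using hkE)])
      hrank_k.le (by omega)
  have hdown_ek : downRank r k (E \ {e, k}) = r E - 1 :=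
    downRank_eq_sub_one hrk0 (by rw [Finset.sdiff_pair_union_singleton hkE hek, hrank_e])
      (hmono _ _ Finset.sdiff_subset subset_rfl)
      (rank_sub_one_le_rank_sdiff_pair hsubmod hjE hkE hek hjk hrank_e hrj hrjk hlam)
  rw [sdiff_sdiff_left, Finset.sup_eq_union, Finset.union_comm, ← Finset.insert_eq, hdown_ek,
    hdown_k]

/-- Let `P` be a compact 2-polymatroid with a prickly 3-separator `{j, k}`.
Then the compression `P↓k` is compact. -/
theorem down_compact {α : Type*} [DecidableEq α]
    (E : Finset α) (r : Finset α → ℤ)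
    (hr0 : r ∅ = 0)
    (hmono : ∀ X Y : Finset α, X ⊆ Y → Y ⊆ E → r X ≤ r Y)
    (hsubmod : ∀ X Y : Finset α, X ⊆ E → Y ⊆ E →
      r (X ∪ Y) + r (X ∩ Y) ≤ r X + r Y)
    (h2 : ∀ e ∈ E, r {e} ≤ 2)
    (hcompact : ∀ e ∈ E, r (E \ {e}) = r E)
    (j k : α) (hjE : j ∈ E) (hkE : k ∈ E) (hjk : j ≠ k)
    (hrj : r {j} = 2) (hrk : r {k} = 2) (hrjk : r ({j, k} : Finset α) = 3)
    (hlam : r ({j, k} : Finset α) + r (E \ {j, k}) - r E = 2)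
    (hguts_j : r ((E \ {j, k}) ∪ {j}) = r (E \ {j, k}) + 1)
    (hguts_k : r ((E \ {j, k}) ∪ {k}) = r (E \ {j, k}) + 1) :
    ∀ e ∈ E \ {k},
      downRank r k ((E \ {k}) \ {e}) = downRank r k (E \ {k}) :=
  down_compact_general E r hmono hsubmod hcompact j k hjE hkE hjk hrj hrk hrjk hlam
end
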